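/- arXiv:2004.00026 — 3 statements merged into one kernel-verified Lean document; each statement's English description precedes it below -/
import Mathlib

section
/- Fix a point y ∈ Y with F(y) ≠ 0. Drawing k i.i.d. samples x_1,…,x_k with probabilities s(x)/s_tot where s(x) ≥ σ(x) for all x, and setting F̂(y) = (1/k)Σ_i (s_tot/s(x_i)) f(x_i, y), Hoeffding's inequality gives Pr[|F̂(y) − F(y)| > ε|F(y)|] ≤ 2 exp(−k ε² / (2 s_tot²)). -/
/-! The summand `(stot / s x) * f x y` has mean `F y` under the sampling distribution `s / stot`,
and since `s` dominates the sensitivity it lies in `[-stot * |F y|, stot * |F y|]`. The left-hand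
side is the probability of a deviation event under the `k`-fold product of that distribution, so
Hoeffding's inequality for sums of independent bounded variables gives the bound. -/

open Real Finset MeasureTheory ProbabilityTheory

lemma abs_le_sup'_abs_div_mul {Y : Type*} [Fintype Y] [Nonempty Y] (u v : Y → ℝ) {y : Y}
    (hv : v y ≠ 0) :
    |u y| ≤ univ.sup' univ_nonempty (fun y' => |u y'| / |v y'|) * |v y| := by
  rw [← div_le_iff₀ (abs_pos.2 hv)]
  exact le_sup' (fun y' => |u y'| / |v y'|) (mem_univ y)

lemma abs_div_mul_le_mul_abs_of_sup'_le {Y : Type*} [Fintype Y] [Nonempty Y] {u v : Y → ℝ}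
    {y : Y} (hv : v y ≠ 0) {r : ℝ} (hr : 0 < r)
    (hsup : univ.sup' univ_nonempty (fun y' => |u y'| / |v y'|) ≤ r) {c : ℝ} (hc : 0 ≤ c) :
    |c / r * u y| ≤ c * |v y| := by
  have hu : |u y| ≤ r * |v y| :=
    (abs_le_sup'_abs_div_mul u v hv).trans (mul_le_mul_of_nonneg_right hsup (abs_nonneg _))
  rw [abs_mul, abs_of_nonneg (div_nonneg hc hr.le)]
  calc c / r * |u y| ≤ c / r * (r * |v y|) := mul_le_mul_of_nonneg_left hu (by positivity)
    _ = c * |v y| := by field_simp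

lemma sum_sub_const_eq_card_mul_mean_sub {ι : Type*} [Fintype ι] (g : ι → ℝ) (m : ℝ) :
    ∑ i, (g i - m) = Fintype.card ι * (1 / (Fintype.card ι : ℝ) * ∑ i, g i - m) := by
  rcases (Fintype.card ι).eq_zero_or_pos with hι | hι
  · simp [Fintype.card_eq_zero_iff.1 hι]
  · rw [sum_sub_distrib, sum_const, card_univ, nsmul_eq_mul]
    field_simp

lemma ProbabilityTheory.HasSubgaussianMGF.measureReal_abs_ge_le {Ω : Type*} [MeasurableSpace Ω]
    {μ : Measure Ω} {Z : Ω → ℝ} {c : NNReal} (h : HasSubgaussianMGF Z c μ) {ε : ℝ} (hε : 0 ≤ ε) :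
    μ.real {ω | ε ≤ |Z ω|} ≤ 2 * exp (-ε ^ 2 / (2 * c)) := by
  have hsplit : {ω | ε ≤ |Z ω|} = {ω | ε ≤ Z ω} ∪ {ω | ε ≤ (-Z) ω} := by
    ext ω
    simp only [Set.mem_ofPred_eq, Set.mem_union, Pi.neg_apply, le_abs', le_neg, or_comm]
  calc μ.real {ω | ε ≤ |Z ω|} ≤ μ.real {ω | ε ≤ Z ω} + μ.real {ω | ε ≤ (-Z) ω} :=
        hsplit ▸ measureReal_union_le _ _
    _ ≤ exp (-ε ^ 2 / (2 * c)) + exp (-ε ^ 2 / (2 * c)) :=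
        add_le_add (h.measure_ge_le hε) (h.neg.measure_ge_le hε)
    _ = 2 * exp (-ε ^ 2 / (2 * c)) := (two_mul _).symm

section Sampling

variable {X ι : Type*} [MeasurableSpace X] [Fintype ι]

lemma hasSubgaussianMGF_pi_sum_sub_integral (μ : Measure X) [IsProbabilityMeasure μ]
    {g : X → ℝ} (hg_meas : Measurable g) {a b : ℝ} (hg : ∀ x, g x ∈ Set.Icc a b) :
    HasSubgaussianMGF (fun xs : ι → X => ∑ i, (g (xs i) - μ[g]))
      (Fintype.card ι * (‖b - a‖₊ / 2) ^ 2) (Measure.pi fun _ => μ) := by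
  have hcoord (i : ι) : HasSubgaussianMGF (fun xs : ι → X => g (xs i) - μ[g])
      ((‖b - a‖₊ / 2) ^ 2) (Measure.pi fun _ => μ) := by
    have h : HasSubgaussianMGF (fun x => g x - μ[g]) ((‖b - a‖₊ / 2) ^ 2)
        ((Measure.pi fun _ => μ).map (Function.eval i)) := by
      rw [(measurePreserving_eval (fun _ : ι => μ) i).map_eq]
      exact hasSubgaussianMGF_of_mem_Icc hg_meas.aemeasurable (ae_of_all μ hg)
    exact .of_map (μ := Measure.pi fun _ => μ) (Y := Function.eval i)
      (measurable_pi_apply i).aemeasurable h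
  have hindep : iIndepFun (fun i (xs : ι → X) => g (xs i) - μ[g]) (Measure.pi fun _ => μ) :=
    iIndepFun_pi (X := fun _ x => g x - μ[g]) fun _ => (hg_meas.sub_const _).aemeasurable
  simpa using HasSubgaussianMGF.sum_of_iIndepFun hindep (s := univ) fun i _ => hcoord i

lemma measureReal_pi_abs_sum_sub_integral_ge_le (μ : Measure X) [IsProbabilityMeasure μ]
    {g : X → ℝ} (hg_meas : Measurable g) {a b : ℝ} (hg : ∀ x, g x ∈ Set.Icc a b)
    {t : ℝ} (ht : 0 ≤ t) :
    (Measure.pi fun _ : ι => μ).real {xs | t ≤ |∑ i, (g (xs i) - μ[g])|} ≤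
      2 * exp (-t ^ 2 / (2 * (Fintype.card ι * ((b - a) / 2) ^ 2))) := by
  have h := (hasSubgaussianMGF_pi_sum_sub_integral μ hg_meas hg (ι := ι)).measureReal_abs_ge_le ht
  simpa [div_pow, sq_abs] using h

end Sampling

section WeightedDiracSum

variable {X : Type*} [Fintype X] [MeasurableSpace X] {w : X → ℝ}

noncomputable def weightedDiracSum (w : X → ℝ) : Measure X :=
  ∑ x, ENNReal.ofReal (w x) • Measure.dirac x

lemma isProbabilityMeasure_weightedDiracSum (hw0 : ∀ x, 0 ≤ w x) (hw1 : ∑ x, w x = 1) :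
    IsProbabilityMeasure (weightedDiracSum w) := by
  constructor
  simp [weightedDiracSum, ← ENNReal.ofReal_sum_of_nonneg fun x _ => hw0 x, hw1]

variable [MeasurableSingletonClass X]

lemma weightedDiracSum_singleton (w : X → ℝ) (x : X) :
    weightedDiracSum w {x} = ENNReal.ofReal (w x) := by
  classical
  simp [weightedDiracSum, Set.indicator_apply]

lemma integral_weightedDiracSum (hw0 : ∀ x, 0 ≤ w x) (g : X → ℝ) :
    ∫ x, g x ∂weightedDiracSum w = ∑ x, w x * g x := by
  rw [weightedDiracSum, integral_finsetSum_measure fun x _ =>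
    (integrable_dirac (by simp)).smul_measure ENNReal.ofReal_ne_top]
  simp [integral_smul_measure, ENNReal.toReal_ofReal (hw0 _)]

lemma measureReal_pi_weightedDiracSum {ι : Type*} [Fintype ι] [DecidableEq ι]
    (hw0 : ∀ x, 0 ≤ w x) (hw1 : ∑ x, w x = 1) (P : (ι → X) → Prop) [DecidablePred P] :
    (Measure.pi fun _ : ι => weightedDiracSum w).real {xs | P xs} =
      ∑ xs, (∏ i, w (xs i)) * if P xs then 1 else 0 := by
  have := isProbabilityMeasure_weightedDiracSum hw0 hw1
  have hset : {xs | P xs} = ↑(univ.filter P) := by ext; simp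
  rw [hset, ← sum_measureReal_singleton, Finset.sum_filter]
  refine Finset.sum_congr rfl fun xs _ => ?_
  split_ifs <;>
    simp [measureReal_def, weightedDiracSum_singleton, ENNReal.toReal_prod,
      ENNReal.toReal_ofReal (hw0 _)]

end WeightedDiracSum

/-- Hoeffding bound for the importance-sampling estimator of F(y) from k i.i.d.
samples drawn with probabilities s(x)/s_tot, where s dominates the sensitivities:
the probability of relative error larger than ε is at most 2·exp(−kε²/(2 s_tot²)). -/
theorem importance_sampling_hoeffding
    {X Y : Type*} [Fintype X] [Fintype Y] [Nonempty X] [Nonempty Y]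
    (f : X → Y → ℝ) (F : Y → ℝ) (hF : ∀ y, F y = ∑ x, f x y)
    (hFne : ∀ y, F y ≠ 0)
    (σ : X → ℝ)
    (hσ : ∀ x, σ x = Finset.univ.sup' Finset.univ_nonempty
        (fun y => |f x y| / |F y|))
    (s : X → ℝ) (hσpos : ∀ x, 0 < σ x) (hs : ∀ x, σ x ≤ s x)
    (stot : ℝ) (hstot : stot = ∑ x, s x)
    (k : ℕ) (hk : 0 < k) (ε : ℝ) (hε : 0 < ε) (y : Y) :
    ∑ xs : Fin k → X,
      (∏ i, s (xs i) / stot) *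
        (if ε * |F y| <
            |(1 / (k : ℝ)) * ∑ i, (stot / s (xs i)) * f (xs i) y - F y|
          then (1 : ℝ) else 0)
      ≤ 2 * Real.exp (-(k * ε ^ 2) / (2 * stot ^ 2)) := by
  let _ : MeasurableSpace X := ⊤
  have hspos (x : X) : 0 < s x := (hσpos x).trans_le (hs x)
  have hstotpos : 0 < stot := hstot ▸ sum_pos (fun x _ => hspos x) univ_nonempty
  set w : X → ℝ := fun x => s x / stot
  have hw0 (x : X) : 0 ≤ w x := (div_pos (hspos x) hstotpos).le
  have hw1 : ∑ x, w x = 1 := by rw [← sum_div, ← hstot, div_self hstotpos.ne']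
  have := isProbabilityMeasure_weightedDiracSum hw0 hw1
  set g : X → ℝ := fun x => stot / s x * f x y
  have hg (x : X) : g x ∈ Set.Icc (-(stot * |F y|)) (stot * |F y|) :=
    abs_le.1 (abs_div_mul_le_mul_abs_of_sup'_le (hFne y) (hspos x) (hσ x ▸ hs x) hstotpos.le)
  have hmean : (weightedDiracSum w)[g] = F y := by
    rw [integral_weightedDiracSum hw0, hF]
    refine sum_congr rfl fun x _ => ?_
    simp only [w, g]
    field_simp [(hspos x).ne', hstotpos.ne']
  have hevent : {xs : Fin k → X | ε * |F y| < |1 / (k : ℝ) * ∑ i, g (xs i) - F y|} ⊆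
      {xs | k * (ε * |F y|) ≤ |∑ i, (g (xs i) - (weightedDiracSum w)[g])|} := by
    intro xs hxs
    rw [Set.mem_ofPred_eq, hmean, sum_sub_const_eq_card_mul_mean_sub, Fintype.card_fin, abs_mul,
      Nat.abs_cast]
    exact mul_le_mul_of_nonneg_left hxs.le (Nat.cast_nonneg k)
  rw [← measureReal_pi_weightedDiracSum hw0 hw1]
  calc _ ≤ _ := measureReal_mono hevent
    _ ≤ _ := measureReal_pi_abs_sum_sub_integral_ge_le _ Measurable.of_discrete hg
        (by positivity)
    _ = _ := by
        rw [Fintype.card_fin]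
        congr 2
        field_simp [hk.ne', hFne y]
        ring
end

section
/- Von Neumann's minimax identity for finite zero-sum games: for any finite sets X, Y and payoff f : X × Y → ℝ, max over probability distributions θ_Y on Y of min over x ∈ X of Σ_y θ_Y(y) f(x,y) equals min over probability distributions θ_X on X of max over y ∈ Y of Σ_x θ_X(x) f(x,y). -/
/-!
Weak duality is Fubini together with the fact that an average lies between the minimum and the
maximum. For the converse, let `c` exceed the max-min value. Then the compact convex set of payoff
vectors `x ↦ ∑ y, q y * f x y`, `q ∈ Δ(Y)`, misses the orthant `{z | ∀ x, c ≤ z x}`. A hyperplane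
separating them has a nonnegative normal, since the orthant is unbounded in every positive
coordinate direction, and the normalized normal is a mixed strategy `p ∈ Δ(X)` that keeps every
column payoff `∑ x, p x * f x y` below `c`.
-/

open Finset

section LinearOrderedField

variable {𝕜 ι : Type*} [Field 𝕜] [LinearOrder 𝕜] [IsStrictOrderedRing 𝕜] [Fintype ι]

theorem inf'_le_sum_mul_of_mem_stdSimplex [Nonempty ι] {w : ι → 𝕜} (hw : w ∈ stdSimplex 𝕜 ι)
    (g : ι → 𝕜) : univ.inf' univ_nonempty g ≤ ∑ i, w i * g i := by
  have := inf_le_centerMass (s := univ) (f := g) (fun i _ => hw.1 i) (by simp [hw.2])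
  rwa [centerMass_eq_of_sum_1 _ _ hw.2] at this

theorem sum_mul_le_sup'_of_mem_stdSimplex [Nonempty ι] {w : ι → 𝕜} (hw : w ∈ stdSimplex 𝕜 ι)
    (g : ι → 𝕜) : ∑ i, w i * g i ≤ univ.sup' univ_nonempty g := by
  have := centerMass_le_sup (s := univ) (f := g) (fun i _ => hw.1 i) (by simp [hw.2])
  rwa [centerMass_eq_of_sum_1 _ _ hw.2] at this

theorem div_sum_mem_stdSimplex {a : ι → 𝕜} (ha : ∀ i, 0 ≤ a i) (hsum : 0 < ∑ i, a i) :
    (fun i => a i / ∑ j, a j) ∈ stdSimplex 𝕜 ι :=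
  ⟨fun i => div_nonneg (ha i) hsum.le, by rw [← sum_div, div_self hsum.ne']⟩

theorem nonneg_of_forall_lt_add_mul {w a b : 𝕜} (h : ∀ t, 0 ≤ t → w < a + b * t) : 0 ≤ b := by
  by_contra! hb
  have hwa : w < a := by simpa using h 0 le_rfl
  have := h ((a - w) / -b) (div_nonneg (sub_nonneg.2 hwa.le) (neg_nonneg.2 hb.le))
  rw [mul_div_assoc', div_neg, mul_div_cancel_left₀ _ hb.ne] at this
  linarith

theorem inf'_sum_mul_le_sup'_sum_mul {X Y : Type*} [Fintype X] [Fintype Y] [Nonempty X]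
    [Nonempty Y] (f : X → Y → 𝕜) {p : X → 𝕜} {q : Y → 𝕜}
    (hp : p ∈ stdSimplex 𝕜 X) (hq : q ∈ stdSimplex 𝕜 Y) :
    univ.inf' univ_nonempty (fun x => ∑ y, q y * f x y) ≤
      univ.sup' univ_nonempty (fun y => ∑ x, p x * f x y) :=
  calc _ ≤ ∑ x, p x * ∑ y, q y * f x y := inf'_le_sum_mul_of_mem_stdSimplex hp _
    _ = ∑ y, q y * ∑ x, p x * f x y := by simp_rw [mul_sum, mul_left_comm (p _)]; exact sum_comm
    _ ≤ _ := sum_mul_le_sup'_of_mem_stdSimplex hq _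

end LinearOrderedField

theorem LinearMap.exists_eq_sum_mul {ι R : Type*} [Fintype ι] [CommSemiring R]
    (g : (ι → R) →ₗ[R] R) : ∃ a : ι → R, ∀ z, g z = ∑ i, a i * z i := by
  classical
  refine ⟨fun i => g (Pi.single i 1), fun z => ?_⟩
  conv_lhs => rw [← univ_sum_single z, map_sum]
  refine sum_congr rfl fun i _ => ?_
  rw [mul_comm, ← smul_eq_mul, ← map_smul, ← Pi.single_smul, smul_eq_mul, mul_one]

theorem Convex.exists_mem_stdSimplex_forall_sum_mul_lt {ι : Type*} [Fintype ι] {K : Set (ι → ℝ)}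
    (hconv : Convex ℝ K) (hcomp : IsCompact K) (hne : K.Nonempty) {c : ℝ}
    (h : ∀ k ∈ K, ∃ i, k i < c) : ∃ p ∈ stdSimplex ℝ ι, ∀ k ∈ K, ∑ i, p i * k i < c := by
  classical
  have hdisj : Disjoint K (Set.Ici fun _ => c) := Set.disjoint_left.2 fun k hk hck => by
    obtain ⟨i, hi⟩ := h k hk
    exact (hi.trans_le (hck i)).false
  obtain ⟨g, u, w, hgK, huw, hgS⟩ :=
    geometric_hahn_banach_compact_closed hconv hcomp (convex_Ici _) isClosed_Ici hdisj
  have hgap : ∀ k ∈ K, g k < g fun _ => c := fun k hk =>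
    (hgK k hk).trans (huw.trans (hgS _ (Set.mem_Ici.2 le_rfl)))
  obtain ⟨a, hg⟩ : ∃ a : ι → ℝ, ∀ z, g z = ∑ i, a i * z i := g.toLinearMap.exists_eq_sum_mul
  have ha : ∀ i, 0 ≤ a i := by
    intro i
    refine nonneg_of_forall_lt_add_mul (w := w) (a := ∑ j, a j * c) fun t ht => ?_
    have hmem : (fun _ => c) + t • Pi.single i 1 ∈ Set.Ici fun _ : ι => c :=
      Set.mem_Ici.2 (le_add_of_nonneg_right (smul_nonneg ht (Pi.single_nonneg.2 zero_le_one)))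
    simpa [hg, mul_add, sum_add_distrib, Pi.single_apply] using hgS _ hmem
  obtain ⟨k, hk⟩ := hne
  have hsum : 0 < ∑ i, a i := by
    refine (sum_nonneg fun i _ => ha i).lt_of_ne fun h0 => ?_
    have ha0 := (sum_eq_zero_iff_of_nonneg fun i _ => ha i).1 h0.symm
    simpa [hg, ha0] using hgap k hk
  refine ⟨_, div_sum_mem_stdSimplex ha hsum, fun k hk => ?_⟩
  have : ∑ i, a i * k i < c * ∑ i, a i := by simpa [hg, mul_sum, mul_comm] using hgap k hk
  simp_rw [div_mul_eq_mul_div, ← sum_div]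
  exact (div_lt_iff₀ hsum).2 this

theorem exists_mem_stdSimplex_forall_sum_mul_lt {X Y : Type*} [Fintype X] [Fintype Y] [Nonempty Y]
    (f : X → Y → ℝ) {c : ℝ} (h : ∀ q ∈ stdSimplex ℝ Y, ∃ x, ∑ y, q y * f x y < c) :
    ∃ p ∈ stdSimplex ℝ X, ∀ y, ∑ x, p x * f x y < c := by
  classical
  let T := Matrix.vecMulLinear (Matrix.of fun y x => f x y)
  obtain ⟨p, hp, hpK⟩ := Convex.exists_mem_stdSimplex_forall_sum_mul_lt
    ((convex_stdSimplex ℝ Y).linear_image T)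
    ((isCompact_stdSimplex ℝ Y).image T.continuous_of_finiteDimensional)
    (Set.Nonempty.image T ⟨_, single_mem_stdSimplex ℝ (Classical.arbitrary Y)⟩)
    (by rintro _ ⟨q, hq, rfl⟩; exact h q hq)
  refine ⟨p, hp, fun y => ?_⟩
  simpa [T] using hpK _ ⟨Pi.single y 1, single_mem_stdSimplex ℝ y, rfl⟩

theorem csSup_eq_csInf_of_forall_exists_lt {α : Type*} [ConditionallyCompleteLinearOrder α]
    {L R : Set α} (hL : L.Nonempty) (hR : R.Nonempty) (hLR : ∀ l ∈ L, ∀ r ∈ R, l ≤ r)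
    (h : ∀ c, (∀ l ∈ L, l < c) → ∃ r ∈ R, r < c) : sSup L = sInf R := by
  obtain ⟨l₀, hl₀⟩ := hL
  obtain ⟨r₀, hr₀⟩ := hR
  refine le_antisymm (csSup_le ⟨l₀, hl₀⟩ fun l hl => le_csInf ⟨r₀, hr₀⟩ (hLR l hl))
    (le_of_forall_gt fun c hc => ?_)
  obtain ⟨r, hr, hrc⟩ := h c fun l hl => (le_csSup ⟨r₀, fun l hl => hLR l hl r₀ hr₀⟩ hl).trans_lt hc
  exact (csInf_le ⟨l₀, hLR l₀ hl₀⟩ hr).trans_lt hrc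

/-- Von Neumann's minimax theorem for finite zero-sum games:
max over mixed strategies θ_Y of the min over x of the expected payoff equals
min over mixed strategies θ_X of the max over y of the expected payoff. -/
theorem vonNeumann_minimax
    {X Y : Type*} [Fintype X] [Fintype Y] [Nonempty X] [Nonempty Y]
    (f : X → Y → ℝ) :
    sSup {v : ℝ | ∃ θY ∈ stdSimplex ℝ Y,
        v = Finset.univ.inf' Finset.univ_nonempty
              (fun x => ∑ y, θY y * f x y)} =
    sInf {v : ℝ | ∃ θX ∈ stdSimplex ℝ X,
        v = Finset.univ.sup' Finset.univ_nonempty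
              (fun y => ∑ x, θX x * f x y)} := by
  classical
  refine csSup_eq_csInf_of_forall_exists_lt
    ⟨_, _, single_mem_stdSimplex ℝ (Classical.arbitrary Y), rfl⟩
    ⟨_, _, single_mem_stdSimplex ℝ (Classical.arbitrary X), rfl⟩ ?_ fun c hc => ?_
  · rintro _ ⟨q, hq, rfl⟩ _ ⟨p, hp, rfl⟩
    exact inf'_sum_mul_le_sup'_sum_mul f hp hq
  · obtain ⟨p, hp, hpc⟩ := exists_mem_stdSimplex_forall_sum_mul_lt f fun q hq => by
      simpa [inf'_lt_iff] using hc _ ⟨q, hq, rfl⟩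
    exact ⟨_, ⟨p, hp, rfl⟩, (sup'_lt_iff _).2 fun y _ => hpc y⟩
end

section
/- Multiplicative weights regret bound: with weights W_{t+1}(x) = W_t(x) e^{−η f(x,y_t)}, W_1 ≡ 1, payoffs f(x,y) ∈ [−1,1], and 0 < η ≤ 1, after T rounds it holds for every x ∈ X that Σ_{t=1}^T ⟨w_t, f(·,y_t)⟩ ≤ Σ_{t=1}^T f(x, y_t) + (ln|X|)/η + ηT/2, where w_t is the normalized weight distribution at round t. -/
/-!
The potential `Φ t = ∑ x, W t x` evolves by
`Φ (t+1) = Φ t · ∑ x, w t x · exp (-η f x (y t))`, and Hoeffding's lemma bounds this average by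
`exp (-η ⟨w t, f · (y t)⟩ + η² / 2)`. Hence
`Φ (T+1) ≤ |X| · exp (-η ∑ t, ⟨w t, f · (y t)⟩ + η² T / 2)`, while
`Φ (T+1) ≥ W (T+1) x = exp (-η ∑ t, f x (y t))`; take logarithms and divide by `η`.
-/

open Real Finset MeasureTheory ProbabilityTheory

theorem sum_mul_exp_le_of_mem_Icc {ι : Type*} [Fintype ι] {p g : ι → ℝ}
    (hp : ∀ i, 0 ≤ p i) (hp1 : ∑ i, p i = 1) {a b : ℝ} (hg : ∀ i, g i ∈ Set.Icc a b) (t : ℝ) :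
    ∑ i, p i * exp (t * g i) ≤ exp (t * ∑ i, p i * g i + (b - a) ^ 2 * t ^ 2 / 8) := by
  let _ : MeasurableSpace ι := ⊤
  let μ : Measure ι := ∑ i, ENNReal.ofReal (p i) • Measure.dirac i
  have hμ : ∀ φ : ι → ℝ, ∫ i, φ i ∂μ = ∑ i, p i * φ i := fun φ ↦ by
    rw [integral_finsetSum_measure fun i _ ↦
      Integrable.of_finite.smul_measure ENNReal.ofReal_ne_top]
    simp [hp]
  have : IsProbabilityMeasure μ :=
    ⟨by simp [μ, ← ENNReal.ofReal_sum_of_nonneg fun i _ ↦ hp i, hp1]⟩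
  have h := (hasSubgaussianMGF_of_mem_Icc (μ := μ) .of_discrete (ae_of_all _ hg)).mgf_le t
  rw [mgf, hμ, hμ] at h
  have hc : ((‖b - a‖₊ / 2) ^ 2 : NNReal) * t ^ 2 / 2 = (b - a) ^ 2 * t ^ 2 / 8 := by
    push_cast [coe_nnnorm, Real.norm_eq_abs]; rw [div_pow, sq_abs]; ring
  rw [hc] at h
  set m := ∑ i, p i * g i
  calc ∑ i, p i * exp (t * g i) = exp (t * m) * ∑ i, p i * exp (t * (g i - m)) := by
        rw [mul_sum]; congr! 1 with i; rw [mul_sub, exp_sub]; field_simp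
    _ ≤ exp (t * m) * exp ((b - a) ^ 2 * t ^ 2 / 8) := by gcongr
    _ = _ := (exp_add _ _).symm

theorem sum_mul_exp_le_sum_mul_exp_of_mem_Icc {ι : Type*} [Fintype ι] {W g : ι → ℝ}
    (hW : ∀ i, 0 ≤ W i) (hS : 0 < ∑ i, W i) {a b : ℝ} (hg : ∀ i, g i ∈ Set.Icc a b) (t : ℝ) :
    ∑ i, W i * exp (t * g i) ≤
      (∑ i, W i) * exp (t * ∑ i, W i / (∑ j, W j) * g i + (b - a) ^ 2 * t ^ 2 / 8) := by
  have hp1 : ∑ i, W i / ∑ j, W j = 1 := by rw [← sum_div, div_self hS.ne']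
  calc ∑ i, W i * exp (t * g i)
        = (∑ i, W i) * ∑ i, W i / (∑ j, W j) * exp (t * g i) := by
        rw [mul_sum]; congr! 1 with i; field_simp
    _ ≤ _ := by
        gcongr
        exact sum_mul_exp_le_of_mem_Icc (fun i ↦ div_nonneg (hW i) hS.le) hp1 hg t

theorem eq_exp_sum_Icc_of_eq_mul_exp {u a : ℕ → ℝ} (h1 : u 1 = 1)
    (h : ∀ t, 1 ≤ t → u (t + 1) = u t * exp (a t)) (n : ℕ) :
    u (n + 1) = exp (∑ t ∈ Icc 1 n, a t) := by
  induction n with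
  | zero => simp [h1]
  | succ n ih => rw [h (n + 1) (by omega), ih, sum_Icc_succ_top (by omega), exp_add]

theorem le_mul_exp_sum_Icc_of_le_mul_exp {u c : ℕ → ℝ}
    (h : ∀ t, 1 ≤ t → u (t + 1) ≤ u t * exp (c t)) (n : ℕ) :
    u (n + 1) ≤ u 1 * exp (∑ t ∈ Icc 1 n, c t) := by
  induction n with
  | zero => simp
  | succ n ih =>
    calc u (n + 1 + 1) ≤ u (n + 1) * exp (c (n + 1)) := h (n + 1) (by omega)
      _ ≤ u 1 * exp (∑ t ∈ Icc 1 n, c t) * exp (c (n + 1)) := by gcongr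
      _ = u 1 * exp (∑ t ∈ Icc 1 (n + 1), c t) := by
        rw [sum_Icc_succ_top (by omega), exp_add, mul_assoc]

theorem multiplicative_weights_regret_general
    {X Y : Type*} [Fintype X]
    (f : X → Y → ℝ) (hf : ∀ x y, |f x y| ≤ 1)
    (η : ℝ) (hη0 : 0 < η)
    (y : ℕ → Y) (T : ℕ)
    (W : ℕ → X → ℝ)
    (hW1 : ∀ x, W 1 x = 1)
    (hrec : ∀ t x, W (t + 1) x = W t x * Real.exp (-η * f x (y t)))
    (w : ℕ → X → ℝ)
    (hw : ∀ t x, w t x = W t x / ∑ x', W t x') :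
    ∀ x : X,
      (∑ t ∈ Finset.Icc 1 T, ∑ x', w t x' * f x' (y t))
        ≤ (∑ t ∈ Finset.Icc 1 T, f x (y t))
          + Real.log (Fintype.card X) / η + η * T / 2 := by
  intro x
  have hW : ∀ n x', W (n + 1) x' = exp (-η * ∑ t ∈ Icc 1 n, f x' (y t)) := fun n x' ↦ by
    rw [eq_exp_sum_Icc_of_eq_mul_exp (u := (W · x')) (hW1 x') (fun t _ ↦ hrec t x') n, mul_sum]
  have hWpos : ∀ t, 1 ≤ t → ∀ x', 0 < W t x' := fun t ht x' ↦ by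
    obtain ⟨n, rfl⟩ := Nat.exists_eq_add_of_le' ht
    exact hW n x' ▸ exp_pos _
  have hpot : ∀ t, 1 ≤ t → ∑ x', W (t + 1) x' ≤
      (∑ x', W t x') * exp (-η * ∑ x', w t x' * f x' (y t) + η ^ 2 / 2) := by
    intro t ht
    have hf' : ∀ x', f x' (y t) ∈ Set.Icc (-1) 1 := fun x' ↦ abs_le.1 (hf x' _)
    have := sum_mul_exp_le_sum_mul_exp_of_mem_Icc (fun x' ↦ (hWpos t ht x').le)
      (sum_pos (fun x' _ ↦ hWpos t ht x') ⟨x, mem_univ x⟩) hf' (-η)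
    simp only [hrec, hw]
    convert this using 3
    ring
  have hcard : ∑ x', W 1 x' = Fintype.card X := by simp [hW1]
  have hexp : exp (-η * ∑ t ∈ Icc 1 T, f x (y t)) ≤ exp (log (Fintype.card X) +
      ∑ t ∈ Icc 1 T, (-η * ∑ x', w t x' * f x' (y t) + η ^ 2 / 2)) := by
    rw [exp_add, exp_log (by simpa using Fintype.card_pos_iff.2 ⟨x⟩), ← hW, ← hcard]
    exact (single_le_sum (fun x' _ ↦ (hWpos _ (by omega) x').le) (mem_univ x)).trans
      (le_mul_exp_sum_Icc_of_le_mul_exp (u := fun t ↦ ∑ x', W t x') hpot T)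
  rw [exp_le_exp, sum_add_distrib, sum_const, Nat.card_Icc, Nat.add_sub_cancel, nsmul_eq_mul,
    ← mul_sum] at hexp
  refine le_of_mul_le_mul_left ?_ hη0
  rw [mul_add, mul_add, mul_div_cancel₀ _ hη0.ne']
  linarith

/-- Multiplicative weights regret bound: after T rounds of the exponential
weights update, for every expert x the algorithm's cumulative expected loss
exceeds that of x by at most (ln|X|)/η + ηT/2. -/
theorem multiplicative_weights_regret
    {X Y : Type*} [Fintype X] [Nonempty X]
    (f : X → Y → ℝ) (hf : ∀ x y, |f x y| ≤ 1)
    (η : ℝ) (hη0 : 0 < η) (hη1 : η ≤ 1)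
    (y : ℕ → Y) (T : ℕ)
    (W : ℕ → X → ℝ)
    (hW1 : ∀ x, W 1 x = 1)
    (hrec : ∀ t x, W (t + 1) x = W t x * Real.exp (-η * f x (y t)))
    (w : ℕ → X → ℝ)
    (hw : ∀ t x, w t x = W t x / ∑ x', W t x') :
    ∀ x : X,
      (∑ t ∈ Finset.Icc 1 T, ∑ x', w t x' * f x' (y t))
        ≤ (∑ t ∈ Finset.Icc 1 T, f x (y t))
          + Real.log (Fintype.card X) / η + η * T / 2 :=
  multiplicative_weights_regret_general f hf η hη0 y T W hW1 hrec w hw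
end
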